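/- arXiv:1110.5489 — 3 statements merged into one kernel-verified Lean document; each statement's English description precedes it below -/
import Mathlib

section
/- Let (X^ε, Ω, P^ε) be an irreducible, OM-reversible parametrized family of Markov chains on a finite state space, and for each ε > 0 let π^ε be a stationary distribution for P^ε such that for each x ∈ Ω the function ε ↦ π^ε(x) is Θ(ε^k) for some integer k = φ(π(x)). Then π satisfies the order-of-magnitude detailed balance condition: for all x, y ∈ Ω with P(x,y) > 0, φ(π(x)) + φ(P(x,y)) = φ(π(y)) + φ(P(y,x)). -/
/-! With `ν` the potential of OM-reversibility it suffices that `φπ - ν` is constant. If not, let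
`S` be its set of minimisers. For an edge `u → v` leaving `S`, reversibility gives
`φπ u + φP u v < φπ v + φP v u`, so for small `ε` the flow `π u P u v` out of `S` dominates the flow
`π v P v u` back; across non-edges both vanish, and irreducibility provides an edge leaving `S`.
The net flow out of `S` is then positive, whereas stationarity makes the net flow across every cut
zero. -/

open Finset

/-- `f` is `Θ(ε^k)` as `ε → 0⁺`: there are positive constants `M₁, M₂, ε̄` with
`M₁ ε^k ≤ f ε ≤ M₂ ε^k` for all `0 < ε < ε̄`. -/
def IsTheta (f : ℝ → ℝ) (k : ℤ) : Prop :=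
  ∃ M₁ M₂ εbar : ℝ, 0 < M₁ ∧ 0 < M₂ ∧ 0 < εbar ∧
    ∀ ε : ℝ, 0 < ε → ε < εbar → M₁ * ε ^ k ≤ f ε ∧ f ε ≤ M₂ * ε ^ k

/-- `P(u,v) > 0` in the order-of-magnitude sense: `ε ↦ P^ε(u,v)` is `Θ(ε^k)`
for some integer `k`. -/
def EPos {Ω : Type*} (P : ℝ → Ω → Ω → ℝ) (u v : Ω) : Prop :=
  ∃ k : ℤ, IsTheta (fun ε => P ε u v) k

open Filter Topology

lemma eventually_nhdsGT_zero_of_forall_lt {p : ℝ → Prop}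
    (h : ∃ εbar > (0 : ℝ), ∀ ε : ℝ, 0 < ε → ε < εbar → p ε) : ∀ᶠ ε in 𝓝[>] 0, p ε := by
  obtain ⟨εbar, hεbar, h⟩ := h
  exact (nhdsGT_basis 0).eventually_iff.2 ⟨εbar, hεbar, fun ε hε => h ε hε.1 hε.2⟩

namespace IsTheta

variable {f g : ℝ → ℝ} {k l : ℤ}

lemma mul (hf : IsTheta f k) (hg : IsTheta g l) : IsTheta (fun ε => f ε * g ε) (k + l) := by
  obtain ⟨A₁, A₂, a, hA₁, hA₂, ha, hf⟩ := hf
  obtain ⟨B₁, B₂, b, hB₁, hB₂, hb, hg⟩ := hg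
  refine ⟨A₁ * B₁, A₂ * B₂, min a b, by positivity, by positivity, lt_min ha hb, ?_⟩
  intro ε hε hεab
  obtain ⟨hf₁, hf₂⟩ := hf ε hε (hεab.trans_le (min_le_left _ _))
  obtain ⟨hg₁, hg₂⟩ := hg ε hε (hεab.trans_le (min_le_right _ _))
  have hsplit : ε ^ (k + l) = ε ^ k * ε ^ l := zpow_add₀ hε.ne' k l
  constructor
  · calc A₁ * B₁ * ε ^ (k + l) = (A₁ * ε ^ k) * (B₁ * ε ^ l) := by rw [hsplit]; ring
      _ ≤ f ε * g ε :=
          mul_le_mul hf₁ hg₁ (by positivity) ((by positivity : (0 : ℝ) ≤ A₁ * ε ^ k).trans hf₁)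
  · calc f ε * g ε ≤ (A₂ * ε ^ k) * (B₂ * ε ^ l) :=
          mul_le_mul hf₂ hg₂ ((by positivity : (0 : ℝ) ≤ B₁ * ε ^ l).trans hg₁) (by positivity)
      _ = A₂ * B₂ * ε ^ (k + l) := by rw [hsplit]; ring

lemma eventually_bounds (hf : IsTheta f k) :
    ∃ M₁ M₂ : ℝ, 0 < M₁ ∧ ∀ᶠ ε in 𝓝[>] 0, M₁ * ε ^ k ≤ f ε ∧ f ε ≤ M₂ * ε ^ k := by
  obtain ⟨M₁, M₂, εbar, hM₁, -, hεbar, hf⟩ := hf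
  exact ⟨M₁, M₂, hM₁, eventually_nhdsGT_zero_of_forall_lt ⟨εbar, hεbar, hf⟩⟩

lemma eventually_lt (hf : IsTheta f k) (hg : IsTheta g l) (hkl : k < l) :
    ∀ᶠ ε in 𝓝[>] 0, g ε < f ε := by
  obtain ⟨A₁, _, hA₁, hf_bounds⟩ := hf.eventually_bounds
  obtain ⟨_, B₂, -, hg_bounds⟩ := hg.eventually_bounds
  have hsmall : ∀ᶠ ε in 𝓝[>] 0, B₂ * ε ^ (l - k) < A₁ := by
    have hcont : ContinuousAt (fun ε : ℝ => B₂ * ε ^ (l - k)) 0 :=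
      continuousAt_const.mul (continuousAt_zpow₀ 0 (l - k) (Or.inr (by omega)))
    have hzero : B₂ * (0 : ℝ) ^ (l - k) = 0 := by rw [zero_zpow _ (by omega), mul_zero]
    rw [← hzero] at hA₁
    exact nhdsWithin_le_nhds (hcont.eventually (gt_mem_nhds hA₁))
  filter_upwards [hf_bounds, hg_bounds, hsmall, self_mem_nhdsWithin] with ε hfε hgε hε hpos
  rw [Set.mem_Ioi] at hpos
  have hsplit : ε ^ l = ε ^ (l - k) * ε ^ k := by rw [← zpow_add₀ hpos.ne', sub_add_cancel]
  calc g ε ≤ B₂ * ε ^ l := hgε.2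
    _ = (B₂ * ε ^ (l - k)) * ε ^ k := by rw [hsplit]; ring
    _ < A₁ * ε ^ k := mul_lt_mul_of_pos_right hε (zpow_pos hpos k)
    _ ≤ f ε := hfε.1

end IsTheta

lemma exists_rel_of_chain {α : Type*} {E : α → α → Prop} {p : α → Prop} {r : ℕ} {c : ℕ → α}
    (hc : ∀ i < r, E (c i) (c (i + 1))) (h₀ : p (c 0)) (hr : ¬ p (c r)) :
    ∃ a b, E a b ∧ p a ∧ ¬ p b := by
  induction r generalizing c with
  | zero => exact absurd h₀ hr
  | succ r ih =>
    by_cases h₁ : p (c 1)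
    · exact ih (c := fun i => c (i + 1)) (fun i hi => hc (i + 1) (by omega)) h₁ hr
    · exact ⟨c 0, c 1, hc 0 (by omega), h₀, h₁⟩

lemma exists_rel_isMin_not_isMin {α β : Type*} [Finite α] [LinearOrder β] {E : α → α → Prop}
    (hE : ∀ u v, ∃ (r : ℕ) (c : ℕ → α), c 0 = u ∧ c r = v ∧ ∀ i < r, E (c i) (c (i + 1)))
    (g : α → β) {z w : α} (hwz : g w < g z) :
    ∃ a b, E a b ∧ (∀ u, g a ≤ g u) ∧ ¬ ∀ u, g b ≤ g u := by
  have : Nonempty α := ⟨z⟩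
  obtain ⟨a₀, ha₀⟩ := Finite.exists_min g
  obtain ⟨r, c, hc₀, hcr, hc⟩ := hE a₀ z
  exact exists_rel_of_chain hc (hc₀ ▸ ha₀) (hcr ▸ fun h => (h w).not_gt hwz)

section Flow

variable {Ω R : Type*} [Fintype Ω] [DecidableEq Ω] [CommRing R] (P : Ω → Ω → R) (π : Ω → R)

lemma sum_cut_flow_eq_zero (hrow : ∀ u, ∑ v, P u v = 1)
    (hstat : ∀ y, ∑ x, π x * P x y = π y) (s : Finset Ω) :
    ∑ u ∈ s, ∑ v ∈ sᶜ, (π u * P u v - π v * P v u) = 0 := by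
  have htotal : ∑ u ∈ s, ∑ v, (π u * P u v - π v * P v u) = 0 :=
    sum_eq_zero fun u _ => by rw [sum_sub_distrib, ← mul_sum, hrow, mul_one, hstat, sub_self]
  have hinside : ∑ u ∈ s, ∑ v ∈ s, (π u * P u v - π v * P v u) = 0 := by
    simp only [sum_sub_distrib]
    rw [sum_comm (s := s) (t := s) (f := fun u v => π v * P v u), sub_self]
  calc ∑ u ∈ s, ∑ v ∈ sᶜ, (π u * P u v - π v * P v u)
      = ∑ u ∈ s, ∑ v, (π u * P u v - π v * P v u) -
          ∑ u ∈ s, ∑ v ∈ s, (π u * P u v - π v * P v u) := by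
        rw [eq_sub_iff_add_eq, ← sum_add_distrib]
        exact sum_congr rfl fun u _ => by rw [add_comm, sum_add_sum_compl]
    _ = 0 := by rw [htotal, hinside, sub_self]

lemma flow_eq_of_forall_flow_le [PartialOrder R] [IsOrderedRing R] (hrow : ∀ u, ∑ v, P u v = 1)
    (hstat : ∀ y, ∑ x, π x * P x y = π y) {s : Finset Ω}
    (hle : ∀ u ∈ s, ∀ v ∈ sᶜ, π v * P v u ≤ π u * P u v) :
    ∀ u ∈ s, ∀ v ∈ sᶜ, π v * P v u = π u * P u v := by
  have hnonneg : ∀ u ∈ s, ∀ v ∈ sᶜ, 0 ≤ π u * P u v - π v * P v u :=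
    fun u hu v hv => sub_nonneg.2 (hle u hu v hv)
  have hzero := (sum_eq_zero_iff_of_nonneg fun u hu => sum_nonneg (hnonneg u hu)).1
    (sum_cut_flow_eq_zero P π hrow hstat s)
  intro u hu v hv
  exact (sub_eq_zero.1 (((sum_eq_zero_iff_of_nonneg (hnonneg u hu)).1 (hzero u hu)) v hv)).symm

end Flow

section OrderOfMagnitude

variable {Ω : Type*} {P : ℝ → Ω → Ω → ℝ} {π : ℝ → Ω → ℝ} {φP : Ω → Ω → ℤ} {φπ : Ω → ℤ}

lemma eventually_flow_lt (hsym : ∀ u v : Ω, EPos P u v ↔ EPos P v u)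
    (hφP : ∀ u v : Ω, EPos P u v → IsTheta (fun ε => P ε u v) (φP u v))
    (hφπ : ∀ x : Ω, IsTheta (fun ε => π ε x) (φπ x)) {u v : Ω} (huv : EPos P u v)
    (h : φπ u + φP u v < φπ v + φP v u) :
    ∀ᶠ ε in 𝓝[>] 0, π ε v * P ε v u < π ε u * P ε u v :=
  ((hφπ u).mul (hφP u v huv)).eventually_lt ((hφπ v).mul (hφP v u ((hsym u v).1 huv))) h

lemma eventually_flow_le
    (hzero : ∀ u v : Ω, ¬ EPos P u v →
      ∃ εbar > (0 : ℝ), ∀ ε : ℝ, 0 < ε → ε < εbar → P ε u v = 0)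
    (hsym : ∀ u v : Ω, EPos P u v ↔ EPos P v u)
    (hφP : ∀ u v : Ω, EPos P u v → IsTheta (fun ε => P ε u v) (φP u v))
    (hφπ : ∀ x : Ω, IsTheta (fun ε => π ε x) (φπ x)) {u v : Ω}
    (h : EPos P u v → φπ u + φP u v < φπ v + φP v u) :
    ∀ᶠ ε in 𝓝[>] 0, π ε v * P ε v u ≤ π ε u * P ε u v := by
  by_cases huv : EPos P u v
  · exact (eventually_flow_lt hsym hφP hφπ huv (h huv)).mono fun _ => le_of_lt
  · have hvu : ¬ EPos P v u := fun hvu => huv ((hsym u v).2 hvu)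
    filter_upwards [eventually_nhdsGT_zero_of_forall_lt (hzero u v huv),
      eventually_nhdsGT_zero_of_forall_lt (hzero v u hvu)] with ε huv₀ hvu₀
    rw [huv₀, hvu₀, mul_zero, mul_zero]

end OrderOfMagnitude

/-- Main theorem: the stationary distribution of a finite, irreducible, OM-reversible
parametrized family of Markov chains satisfies order-of-magnitude detailed balance:
for all `x, y` with `P(x,y) > 0`, `φ(π(x)) + φ(P(x,y)) = φ(π(y)) + φ(P(y,x))`. -/
theorem stationary_satisfies_OM_detailed_balance
    {Ω : Type*} [Fintype Ω] (P : ℝ → Ω → Ω → ℝ)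
    (hstoch : ∀ ε : ℝ, 0 < ε → (∀ u v : Ω, 0 ≤ P ε u v) ∧ ∀ u : Ω, ∑ v, P ε u v = 1)
    (hzero : ∀ u v : Ω, ¬ EPos P u v →
      ∃ εbar > (0 : ℝ), ∀ ε : ℝ, 0 < ε → ε < εbar → P ε u v = 0)
    (hsym : ∀ u v : Ω, EPos P u v ↔ EPos P v u)
    (φP : Ω → Ω → ℤ)
    (hφP : ∀ u v : Ω, EPos P u v → IsTheta (fun ε => P ε u v) (φP u v))
    (hirr : ∀ u v : Ω, ∃ (r : ℕ) (c : ℕ → Ω),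
      c 0 = u ∧ c r = v ∧ ∀ i < r, EPos P (c i) (c (i + 1)))
    (homrev : ∃ ν : Ω → ℤ, ∀ u v : Ω, EPos P u v → ν u + φP u v = ν v + φP v u)
    (π : ℝ → Ω → ℝ)
    (hstat : ∀ ε : ℝ, 0 < ε → (∀ x : Ω, 0 ≤ π ε x) ∧ (∑ x, π ε x) = 1 ∧
      ∀ y : Ω, (∑ x, π ε x * P ε x y) = π ε y)
    (φπ : Ω → ℤ)
    (hφπ : ∀ x : Ω, IsTheta (fun ε => π ε x) (φπ x)) :
    ∀ x y : Ω, EPos P x y → φπ x + φP x y = φπ y + φP y x := by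
  classical
  obtain ⟨ν, hν⟩ := homrev
  intro x y hxy
  suffices hmin : ∀ z w, φπ w - ν w ≤ φπ z - ν z by
    have := hν x y hxy; have := hmin x y; have := hmin y x; omega
  by_contra! ⟨z, w, hwz⟩
  obtain ⟨a, b, hab, ha, hb⟩ := exists_rel_isMin_not_isMin hirr (fun z => φπ z - ν z) hwz
  set S := univ.filter fun u => ∀ w, φπ u - ν u ≤ φπ w - ν w
  have hcross : ∀ u ∈ S, ∀ v ∈ Sᶜ, EPos P u v → φπ u + φP u v < φπ v + φP v u := by
    intro u hu v hv huv
    simp only [S, mem_compl, mem_filter, mem_univ, true_and, not_forall, not_le] at hu hv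
    obtain ⟨w, hw⟩ := hv
    have := hν u v huv; have := hu w; omega
  have hS : a ∈ S ∧ b ∈ Sᶜ :=
    ⟨mem_filter.2 ⟨mem_univ a, ha⟩, mem_compl.2 fun h => hb (mem_filter.1 h).2⟩
  have hev : ∀ᶠ ε in 𝓝[>] 0, (∀ u ∈ S, ∀ v ∈ Sᶜ, π ε v * P ε v u ≤ π ε u * P ε u v) ∧
      π ε b * P ε b a < π ε a * P ε a b := by
    refine .and ?_ (eventually_flow_lt hsym hφP hφπ hab (hcross a hS.1 b hS.2 hab))
    simp only [eventually_all_finset]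
    exact fun u hu v hv => eventually_flow_le hzero hsym hφP hφπ (hcross u hu v hv)
  obtain ⟨ε, ⟨hle, hlt⟩, hε⟩ := (hev.and self_mem_nhdsWithin).exists
  exact hlt.ne (flow_eq_of_forall_flow_le (P ε) (π ε) (hstoch ε hε).2 (hstat ε hε).2.2 hle
    a hS.1 b hS.2)
end

section
/- Let (X^ε, Ω, P^ε) be an irreducible parametrized family of Markov chains on a finite state space. Then the family is OM-reversible if and only if it satisfies the OM-cycle condition. -/
open Finset

/-!
Write `d u v = φ(u,v) - φ(v,u)`. Detailed balance says that `d` is the coboundary `ν v - ν u`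
of a potential, so its sum along a closed walk telescopes to `0`. Conversely, fix a base point `o`
and let `ν u` be the `d`-sum along some walk from `o` to `u`. For an edge `u → v`, closing the
walk `o ⇝ u → v` with a walk `v ⇝ o`, and closing `o ⇝ u` with a walk `u ⇝ o`, gives two cycles
whose `d`-sums vanish; subtracting them yields `d u v = ν v - ν u`.
-/

namespace OMReversible

variable {α : Type*}

def IsWalk (R : α → α → Prop) (c : ℕ → α) (m : ℕ) : Prop :=
  ∀ i < m, R (c i) (c (i + 1))

def walkSum {G : Type*} [AddCommMonoid G] (d : α → α → G) (c : ℕ → α) (m : ℕ) : G :=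
  ∑ i ∈ range m, d (c i) (c (i + 1))

def seqAppend (c₁ : ℕ → α) (m : ℕ) (c₂ : ℕ → α) : ℕ → α :=
  fun i => if i ≤ m then c₁ i else c₂ (i - m)

section seqAppend

variable {c₁ c₂ : ℕ → α} {m : ℕ}

theorem seqAppend_of_le {i : ℕ} (hi : i ≤ m) : seqAppend c₁ m c₂ i = c₁ i := if_pos hi

theorem seqAppend_add (h : c₁ m = c₂ 0) (j : ℕ) : seqAppend c₁ m c₂ (m + j) = c₂ j := by
  rcases Nat.eq_zero_or_pos j with rfl | hj
  · exact (seqAppend_of_le le_rfl).trans h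
  · simp only [seqAppend, if_neg (by omega : ¬ m + j ≤ m), Nat.add_sub_cancel_left]

theorem IsWalk.seqAppend {R : α → α → Prop} {n : ℕ} (h : c₁ m = c₂ 0)
    (h₁ : IsWalk R c₁ m) (h₂ : IsWalk R c₂ n) : IsWalk R (seqAppend c₁ m c₂) (m + n) := by
  intro i hi
  by_cases him : i < m
  · rw [seqAppend_of_le him.le, seqAppend_of_le him]
    exact h₁ i him
  · obtain ⟨j, rfl⟩ := Nat.exists_eq_add_of_le (not_lt.mp him)
    rw [add_assoc, seqAppend_add h, seqAppend_add h]
    exact h₂ j (by omega)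

theorem walkSum_seqAppend {G : Type*} [AddCommMonoid G] (d : α → α → G) {n : ℕ}
    (h : c₁ m = c₂ 0) :
    walkSum d (seqAppend c₁ m c₂) (m + n) = walkSum d c₁ m + walkSum d c₂ n := by
  unfold walkSum
  rw [sum_range_add]
  congr 1
  · refine sum_congr rfl fun i hi => ?_
    have hi : i < m := mem_range.mp hi
    rw [seqAppend_of_le hi.le, seqAppend_of_le hi]
  · refine sum_congr rfl fun j _ => ?_
    rw [add_assoc, seqAppend_add h, seqAppend_add h]

theorem walkSum_add_walkSum_eq_zero {G : Type*} [AddCommMonoid G] {R : α → α → Prop}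
    {d : α → α → G}
    (hcyc : ∀ (m : ℕ) (c : ℕ → α), c m = c 0 → IsWalk R c m → walkSum d c m = 0) {n : ℕ}
    (h : c₁ m = c₂ 0) (hclosed : c₂ n = c₁ 0) (h₁ : IsWalk R c₁ m) (h₂ : IsWalk R c₂ n) :
    walkSum d c₁ m + walkSum d c₂ n = 0 := by
  rw [← walkSum_seqAppend d h]
  refine hcyc _ _ ?_ (h₁.seqAppend h h₂)
  rw [seqAppend_add h, seqAppend_of_le (Nat.zero_le m), hclosed]

end seqAppend

variable {G : Type*} [AddCommGroup G] {R : α → α → Prop} {d : α → α → G}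

theorem walkSum_eq_zero_of_potential {ν : α → G} (hν : ∀ u v, R u v → d u v = ν v - ν u)
    {c : ℕ → α} {m : ℕ} (hc : c m = c 0) (hw : IsWalk R c m) : walkSum d c m = 0 := by
  calc walkSum d c m = ∑ i ∈ range m, (ν (c (i + 1)) - ν (c i)) :=
        sum_congr rfl fun i hi => hν _ _ (hw i (mem_range.mp hi))
    _ = 0 := by rw [sum_range_sub (fun i => ν (c i)), hc, sub_self]

theorem exists_potential_iff_walkSum_eq_zero
    (hconn : ∀ u v, ∃ (m : ℕ) (c : ℕ → α), c 0 = u ∧ c m = v ∧ IsWalk R c m) :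
    (∃ ν : α → G, ∀ u v, R u v → d u v = ν v - ν u) ↔
      ∀ (m : ℕ) (c : ℕ → α), c m = c 0 → IsWalk R c m → walkSum d c m = 0 := by
  refine ⟨fun ⟨ν, hν⟩ m c hc hw => walkSum_eq_zero_of_potential hν hc hw, fun hcyc => ?_⟩
  rcases isEmpty_or_nonempty α with _ | ⟨⟨o⟩⟩
  · exact ⟨0, fun u => isEmptyElim u⟩
  choose r a ha₀ har haw using fun u => hconn o u
  choose s b hb₀ hbs hbw using fun u => hconn u o
  refine ⟨fun u => walkSum d (a u) (r u), fun u v huv => ?_⟩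
  have hback : walkSum d (a v) (r v) + walkSum d (b v) (s v) = 0 :=
    walkSum_add_walkSum_eq_zero hcyc ((har v).trans (hb₀ v).symm) ((hbs v).trans (ha₀ v).symm)
      (haw v) (hbw v)
  let edge : ℕ → α := fun i => if i = 0 then u else v
  have hedge : (a u) (r u) = edge 0 := har u
  have hloop := walkSum_add_walkSum_eq_zero hcyc
    (c₁ := seqAppend (a u) (r u) edge) (c₂ := b v)
    ((seqAppend_add hedge 1).trans (hb₀ v).symm)
    ((hbs v).trans ((ha₀ u).symm.trans (seqAppend_of_le (Nat.zero_le _)).symm))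
    ((haw u).seqAppend hedge fun i hi => by simpa [Nat.lt_one_iff.mp hi, edge] using huv)
    (hbw v)
  have hedgeSum : walkSum d edge 1 = d u v := by simp [walkSum, edge]
  rw [walkSum_seqAppend d hedge, hedgeSum, eq_neg_of_add_eq_zero_right hback] at hloop
  show d u v = walkSum d (a v) (r v) - walkSum d (a u) (r u)
  rw [← sub_eq_zero, ← hloop]
  abel

end OMReversible

theorem OM_reversible_iff_OM_cycle_condition_general
    {Ω : Type*} (P : ℝ → Ω → Ω → ℝ)
    (φP : Ω → Ω → ℤ)
    (hirr : ∀ u v : Ω, ∃ (r : ℕ) (c : ℕ → Ω),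
      c 0 = u ∧ c r = v ∧ ∀ i < r, EPos P (c i) (c (i + 1))) :
    (∃ ν : Ω → ℤ, ∀ u v : Ω, EPos P u v → ν u + φP u v = ν v + φP v u)
    ↔ (∀ (m : ℕ) (c : ℕ → Ω), c m = c 0 → (∀ i < m, EPos P (c i) (c (i + 1))) →
        ∑ i ∈ Finset.range m, φP (c i) (c (i + 1)) =
          ∑ i ∈ Finset.range m, φP (c (i + 1)) (c i)) := by
  have key := OMReversible.exists_potential_iff_walkSum_eq_zero
    (d := fun u v => φP u v - φP v u) hirr
  simp only [OMReversible.walkSum, OMReversible.IsWalk, sum_sub_distrib, sub_eq_zero] at key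
  rw [← key]
  exact exists_congr fun ν => forall₂_congr fun u v => imp_congr_right fun _ => by omega

/-- For an irreducible parametrized family of Markov chains, OM-reversibility
(existence of `ν : Ω → ℤ` satisfying order-of-magnitude detailed balance) is
equivalent to the OM-Kolmogorov cycle condition. -/
theorem OM_reversible_iff_OM_cycle_condition
    {Ω : Type*} [Fintype Ω] (P : ℝ → Ω → Ω → ℝ)
    (hstoch : ∀ ε : ℝ, 0 < ε → (∀ u v : Ω, 0 ≤ P ε u v) ∧ ∀ u : Ω, ∑ v, P ε u v = 1)
    (hzero : ∀ u v : Ω, ¬ EPos P u v →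
      ∃ εbar > (0 : ℝ), ∀ ε : ℝ, 0 < ε → ε < εbar → P ε u v = 0)
    (hsym : ∀ u v : Ω, EPos P u v ↔ EPos P v u)
    (φP : Ω → Ω → ℤ)
    (hφP : ∀ u v : Ω, EPos P u v → IsTheta (fun ε => P ε u v) (φP u v))
    (hirr : ∀ u v : Ω, ∃ (r : ℕ) (c : ℕ → Ω),
      c 0 = u ∧ c r = v ∧ ∀ i < r, EPos P (c i) (c (i + 1))) :
    (∃ ν : Ω → ℤ, ∀ u v : Ω, EPos P u v → ν u + φP u v = ν v + φP v u)
    ↔ (∀ (m : ℕ) (c : ℕ → Ω), c m = c 0 → (∀ i < m, EPos P (c i) (c (i + 1))) →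
        ∑ i ∈ Finset.range m, φP (c i) (c (i + 1)) =
          ∑ i ∈ Finset.range m, φP (c (i + 1)) (c i)) :=
  OM_reversible_iff_OM_cycle_condition_general P φP hirr
end

section
/- Let (X^ε, Ω, P^ε) be a clustering process on a finite connected graph with n ≥ 1 particles. Then the family is OM-reversible: the function ν(x) = |s(x)| − 1 satisfies the order-of-magnitude detailed balance condition ν(x) + φ(P(x,y)) = ν(y) + φ(P(y,x)) for all x, y with P(x,y) > 0. Moreover, if for each ε > 0, π^ε is a stationary distribution for P^ε such that for each x ∈ Ω the function ε ↦ π^ε(x) is Θ(ε^k) for some integer k = φ(π(x)), then φ(π(x)) = |s(x)| − 1 for every x ∈ Ω. -/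
/-!
A move of one particle from `i` to `j` has order `[x_j = 0]` and its reverse has order
`[x_i = 1]`; the support grows by exactly the difference, which is detailed balance for
`ν = |s| - 1`. For a stationary `π` put `h = φ(π) - ν` and cut the state space at the set `A`
where `h` is maximal. Stationarity balances the flow out of `A` against the flow into it, and by
detailed balance every inflow term has strictly smaller order than its outflow partner when `h`
drops along the edge; since the move graph is connected, `h` must be constant. Normalisation
`∑ π = 1` makes `min φ(π) = 0`, and `min ν = 0` at a point mass, so the constant is `0`.
-/

open Finset

/-- Configurations of `n` particles on the vertex set `V`. -/
abbrev Config (V : Type) [Fintype V] (n : ℕ) := {x : V → ℕ // ∑ v, x v = n}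

noncomputable instance Config.fintype {V : Type} [Fintype V] [DecidableEq V] {n : ℕ} :
    Fintype (Config V n) :=
  Fintype.ofInjective
    (fun x : Config V n => fun v : V =>
      (⟨x.val v, Nat.lt_succ_of_le ((Finset.single_le_sum
        (f := x.val) (fun i _ => Nat.zero_le _) (Finset.mem_univ v)).trans
        (le_of_eq x.2))⟩ : Fin (n + 1)))
    (fun a b h => Subtype.ext (funext fun v => congrArg Fin.val (congrFun h v)))

/-- The configuration `x^{i,j}` obtained from `x` by moving one particle from vertex `i`
to vertex `j` (with `x^{i,i} = x`). -/
def move {V : Type} [DecidableEq V] (x : V → ℕ) (i j : V) : V → ℕ :=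
  if i = j then x else Function.update (Function.update x i (x i - 1)) j (x j + 1)

/-- The support of a configuration: the set of occupied vertices. -/
def supp {V : Type} [Fintype V] [DecidableEq V] (x : V → ℕ) : Finset V :=
  Finset.univ.filter fun v => x v ≠ 0

open Filter Topology

namespace IsTheta

variable {f g : ℝ → ℝ} {k l : ℤ}

lemma iff_eventually : IsTheta f k ↔ ∃ M₁ M₂ : ℝ, 0 < M₁ ∧ 0 < M₂ ∧
    ∀ᶠ ε in 𝓝[>] 0, M₁ * ε ^ k ≤ f ε ∧ f ε ≤ M₂ * ε ^ k := by
  simp only [IsTheta, (nhdsGT_basis (0 : ℝ)).eventually_iff, Set.mem_Ioo, and_imp]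
  aesop

lemma congr (hf : IsTheta f k) (h : ∀ᶠ ε in 𝓝[>] 0, f ε = g ε) : IsTheta g k := by
  obtain ⟨M₁, M₂, hM₁, hM₂, hf⟩ := iff_eventually.1 hf
  exact iff_eventually.2 ⟨M₁, M₂, hM₁, hM₂, by filter_upwards [hf, h] with ε hε he; rwa [← he]⟩

lemma not_lt (hk : IsTheta f k) (hl : IsTheta f l) : ¬ k < l := by
  intro hkl
  obtain ⟨M₁, _, hM₁, _, hfk⟩ := iff_eventually.1 hk
  obtain ⟨_, N₂, _, hN₂, hfl⟩ := iff_eventually.1 hl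
  have hsmall := Ioo_mem_nhdsGT (lt_min one_pos (div_pos hM₁ hN₂))
  obtain ⟨ε, hkε, hlε, hε₀, hε⟩ := (hfk.and (hfl.and hsmall)).exists
  have hεk : 0 < ε ^ k := zpow_pos hε₀ k
  have hεl : ε ^ l ≤ ε ^ (k + 1) :=
    zpow_le_zpow_right_of_le_one₀ hε₀ (hε.le.trans (min_le_left _ _)) hkl
  have hN₂ε : N₂ * ε < M₁ := (lt_div_iff₀' hN₂).1 (hε.trans_le (min_le_right _ _))
  rw [zpow_add_one₀ hε₀.ne'] at hεl
  nlinarith [hkε.1, hlε.2]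

lemma unique (hk : IsTheta f k) (hl : IsTheta f l) : k = l :=
  le_antisymm (Int.not_lt.1 (hl.not_lt hk)) (Int.not_lt.1 (hk.not_lt hl))

lemma add (hf : IsTheta f k) (hg : IsTheta g l) : IsTheta (fun ε => f ε + g ε) (min k l) := by
  obtain ⟨M₁, M₂, hM₁, hM₂, hf⟩ := iff_eventually.1 hf
  obtain ⟨N₁, N₂, hN₁, hN₂, hg⟩ := iff_eventually.1 hg
  refine iff_eventually.2 ⟨min M₁ N₁, M₂ + N₂, by positivity, by positivity, ?_⟩
  filter_upwards [hf, hg, Ioo_mem_nhdsGT one_pos] with ε ⟨hf₁, hf₂⟩ ⟨hg₁, hg₂⟩ ⟨hε₀, hε₁⟩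
  have hεk : 0 < ε ^ k := zpow_pos hε₀ k
  have hεl : 0 < ε ^ l := zpow_pos hε₀ l
  have hk : ε ^ k ≤ ε ^ min k l := zpow_le_zpow_right_of_le_one₀ hε₀ hε₁.le (min_le_left _ _)
  have hl : ε ^ l ≤ ε ^ min k l := zpow_le_zpow_right_of_le_one₀ hε₀ hε₁.le (min_le_right _ _)
  constructor
  · rcases min_cases k l with ⟨hmin, -⟩ | ⟨hmin, -⟩ <;> rw [hmin]
    · nlinarith [min_le_left M₁ N₁, mul_pos hN₁ hεl]
    · nlinarith [min_le_right M₁ N₁, mul_pos hM₁ hεk]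
  · nlinarith

lemma finset_sum {ι : Type*} {t : Finset ι} (ht : t.Nonempty) {F : ι → ℝ → ℝ} {K : ι → ℤ}
    (hF : ∀ a ∈ t, IsTheta (F a) (K a)) : IsTheta (fun ε => ∑ a ∈ t, F a ε) (t.inf' ht K) := by
  induction ht using Finset.Nonempty.cons_induction with
  | singleton a => simpa using hF a (mem_singleton_self a)
  | cons a s ha hs ih =>
    rw [inf'_cons hs]
    simpa only [sum_cons] using (hF a (mem_cons_self a s)).add
      (ih fun b hb => hF b (mem_cons_of_mem hb))

lemma finset_sum_of_eventually_zero {ι : Type*} {s t : Finset ι} (hts : t ⊆ s) (ht : t.Nonempty)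
    {F : ι → ℝ → ℝ} {K : ι → ℤ} (hF : ∀ a ∈ t, IsTheta (F a) (K a))
    (hzero : ∀ a ∈ s, a ∉ t → ∀ᶠ ε in 𝓝[>] 0, F a ε = 0) :
    IsTheta (fun ε => ∑ a ∈ s, F a ε) (t.inf' ht K) := by
  refine (finset_sum ht hF).congr ?_
  have hzero' : ∀ᶠ ε in 𝓝[>] 0, ∀ a ∈ s, a ∉ t → F a ε = 0 := by
    simpa only [eventually_all_finset, eventually_imp_distrib_left] using hzero
  filter_upwards [hzero'] with ε hε
  exact sum_subset hts hε

end IsTheta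

lemma isTheta_const_one : IsTheta (fun _ => 1) 0 :=
  ⟨1, 1, 1, one_pos, one_pos, one_pos, fun ε _ _ => by simp⟩

lemma Relation.ReflTransGen.exists_rel_of_not {α : Type*} {r : α → α → Prop} {p : α → Prop}
    {a b : α} (hab : Relation.ReflTransGen r a b) (ha : p a) (hb : ¬ p b) :
    ∃ x y, p x ∧ ¬ p y ∧ r x y := by
  induction hab with
  | refl => exact absurd ha hb
  | @tail c d _ hcd ih =>
    by_cases hc : p c
    · exact ⟨c, d, hc, hb, hcd⟩
    · exact ih hc

section OrderOfMagnitude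

variable {Ω : Type*} [Fintype Ω]

lemma sum_flux_compl_eq [DecidableEq Ω] (P : Ω → Ω → ℝ) (π : Ω → ℝ) (hrow : ∀ x, ∑ y, P x y = 1)
    (hstat : ∀ y, ∑ x, π x * P x y = π y) (A : Finset Ω) :
    ∑ p ∈ A ×ˢ Aᶜ, π p.1 * P p.1 p.2 = ∑ p ∈ A ×ˢ Aᶜ, π p.2 * P p.2 p.1 := by
  have hout : ∀ x, ∑ y ∈ Aᶜ, π x * P x y = π x - ∑ y ∈ A, π x * P x y := fun x => by
    rw [eq_sub_iff_add_eq', sum_add_sum_compl, ← mul_sum, hrow, mul_one]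
  have hin : ∀ x, ∑ y ∈ Aᶜ, π y * P y x = π x - ∑ y ∈ A, π y * P y x := fun x => by
    rw [eq_sub_iff_add_eq', sum_add_sum_compl, hstat]
  simp only [sum_product, hout, hin, sum_sub_distrib]
  rw [sum_comm]

lemma inf'_eq_zero_of_sum_eq_one [Nonempty Ω] {π : ℝ → Ω → ℝ} {φπ : Ω → ℤ}
    (hsum : ∀ ε, 0 < ε → ∑ z, π ε z = 1) (hφπ : ∀ z, IsTheta (fun ε => π ε z) (φπ z)) :
    univ.inf' univ_nonempty φπ = 0 :=
  ((IsTheta.finset_sum univ_nonempty fun z _ => hφπ z).congr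
    (eventually_nhdsWithin_of_forall hsum)).unique isTheta_const_one

theorem exists_order_eq_add_const {P : ℝ → Ω → Ω → ℝ} (hrow : ∀ ε, 0 < ε → ∀ x, ∑ y, P ε x y = 1)
    (hzero : ∀ x y, ¬ EPos P x y → ∀ᶠ ε in 𝓝[>] 0, P ε x y = 0)
    (hsymm : ∀ x y, EPos P x y → EPos P y x) (hconn : ∀ x y, Relation.ReflTransGen (EPos P) x y)
    {φP : Ω → Ω → ℤ} (hφP : ∀ x y, EPos P x y → IsTheta (fun ε => P ε x y) (φP x y))
    {ν : Ω → ℤ} (hbal : ∀ x y, EPos P x y → ν x + φP x y = ν y + φP y x)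
    {π : ℝ → Ω → ℝ} (hstat : ∀ ε, 0 < ε → ∀ y, ∑ x, π ε x * P ε x y = π ε y)
    {φπ : Ω → ℤ} (hφπ : ∀ z, IsTheta (fun ε => π ε z) (φπ z)) :
    ∃ c, ∀ z, φπ z = ν z + c := by
  classical
  rcases isEmpty_or_nonempty Ω with hΩ | hΩ
  · exact ⟨0, fun z => isEmptyElim z⟩
  obtain ⟨a, ha⟩ := Finite.exists_max fun z => φπ z - ν z
  refine ⟨φπ a - ν a, fun z => ?_⟩
  by_contra hz
  set A := univ.filter fun z => φπ z - ν z = φπ a - ν a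
  obtain ⟨x₀, y₀, hx₀, hy₀, hxy₀⟩ := (hconn a z).exists_rel_of_not (p := (· ∈ A))
    (by simp [A]) (by simp [A]; omega)
  set T := (A ×ˢ Aᶜ).filter fun p => EPos P p.1 p.2
  have hT : T.Nonempty := ⟨(x₀, y₀), by simp [T, hx₀, hy₀, hxy₀]⟩
  have hterm : ∀ x y, ¬ EPos P x y → ∀ᶠ ε in 𝓝[>] 0, π ε x * P ε x y = 0 := fun x y hxy => by
    filter_upwards [hzero x y hxy] with ε hε
    rw [hε, mul_zero]
  have hout := IsTheta.finset_sum_of_eventually_zero (filter_subset _ _) hT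
    (K := fun p => φπ p.1 + φP p.1 p.2) (fun p hp => (hφπ p.1).mul (hφP _ _ (mem_filter.1 hp).2))
    (fun p hp hpT => hterm _ _ fun h => hpT (mem_filter.2 ⟨hp, h⟩))
  have hin := IsTheta.finset_sum_of_eventually_zero (filter_subset _ _) hT
    (K := fun p => φπ p.2 + φP p.2 p.1)
    (fun p hp => (hφπ p.2).mul (hφP _ _ (hsymm _ _ (mem_filter.1 hp).2)))
    (fun p hp hpT => hterm _ _ fun h => hpT (mem_filter.2 ⟨hp, hsymm _ _ h⟩))
  have heq : T.inf' hT (fun p => φπ p.1 + φP p.1 p.2) = T.inf' hT (fun p => φπ p.2 + φP p.2 p.1) :=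
    hout.unique (hin.congr (eventually_nhdsWithin_of_forall fun ε hε =>
      (sum_flux_compl_eq _ _ (hrow ε hε) (hstat ε hε) A).symm))
  -- across the cut each inflow order is below the outflow order, as `φπ - ν` drops there
  obtain ⟨p, hp, hpmin⟩ := exists_mem_eq_inf' hT fun p => φπ p.1 + φP p.1 p.2
  have hpin := inf'_le (fun p => φπ p.2 + φP p.2 p.1) hp
  simp only [T, A, mem_filter, mem_product, mem_compl, mem_univ, true_and] at hp
  have := hbal _ _ hp.2
  have := ha p.2
  omega

end OrderOfMagnitude

section Move

variable {V : Type} [DecidableEq V] {x : V → ℕ} {i j v : V}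

lemma move_apply_left (hij : i ≠ j) : move x i j i = x i - 1 := by
  simp [move, hij, Function.update]

lemma move_apply_right (hij : i ≠ j) : move x i j j = x j + 1 := by
  simp [move, hij, Function.update]

lemma one_le_move_apply_right (hij : i ≠ j) : 1 ≤ move x i j j := by
  rw [move_apply_right hij]
  omega

lemma move_apply_of_ne (hvi : v ≠ i) (hvj : v ≠ j) : move x i j v = x v := by
  unfold move
  split_ifs <;> simp [Function.update, hvi, hvj]

lemma move_move (hij : i ≠ j) (hx : 1 ≤ x i) : move (move x i j) j i = x := by
  funext v
  by_cases hvj : v = j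
  · subst hvj
    rw [move_apply_left hij.symm, move_apply_right hij]
    omega
  by_cases hvi : v = i
  · subst hvi
    rw [move_apply_right hij.symm, move_apply_left hij]
    omega
  rw [move_apply_of_ne hvj hvi, move_apply_of_ne hvi hvj]

variable [Fintype V]

lemma sum_comp_move {M : Type*} [AddCommGroup M] (g : V → ℕ → M) (hij : i ≠ j) :
    ∑ v, g v (move x i j v) =
      ∑ v, g v (x v) + (g i (x i - 1) - g i (x i)) + (g j (x j + 1) - g j (x j)) := by
  have hdiff : ∑ v, (g v (move x i j v) - g v (x v)) =
      ∑ v ∈ {i, j}, (g v (move x i j v) - g v (x v)) := by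
    refine (sum_subset (subset_univ _) fun v _ hv => ?_).symm
    simp only [mem_insert, mem_singleton, not_or] at hv
    rw [move_apply_of_ne hv.1 hv.2, sub_self]
  rw [sum_pair hij, move_apply_left hij, move_apply_right hij, sum_sub_distrib] at hdiff
  rw [← sub_eq_zero, ← sub_eq_zero.2 hdiff]
  abel

lemma sum_move (hij : i ≠ j) (hx : 1 ≤ x i) : ∑ v, move x i j v = ∑ v, x v := by
  have := sum_comp_move (x := x) (fun _ m => (m : ℤ)) hij
  zify
  rw [this]
  push_cast [Nat.cast_sub hx]
  ring

lemma card_supp_move (hij : i ≠ j) (hx : 1 ≤ x i) :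
    ((supp (move x i j)).card : ℤ) =
      (supp x).card + (if x j = 0 then 1 else 0) - (if x i = 1 then 1 else 0) := by
  have hcard : ∀ y : V → ℕ, ((supp y).card : ℤ) = ∑ v, if y v = 0 then 0 else 1 := fun y => by
    simp [supp, card_filter, ite_not]
  rw [hcard, hcard, sum_comp_move (fun _ m => if m = 0 then (0 : ℤ) else 1) hij]
  by_cases h1 : x i = 1 <;> by_cases h0 : x j = 0 <;> simp [h1, h0] <;> omega

end Move

lemma SimpleGraph.Connected.exists_adj_dist_lt {V : Type*} {G : SimpleGraph V} (hG : G.Connected)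
    {v w : V} (hvw : v ≠ w) : ∃ u, G.Adj v u ∧ G.dist u w < G.dist v w := by
  obtain ⟨p, hp⟩ := hG.exists_walk_length_eq_dist v w
  cases p with
  | nil => exact absurd rfl hvw
  | cons hadj q =>
    rw [SimpleGraph.Walk.length_cons] at hp
    exact ⟨_, hadj, (SimpleGraph.dist_le q).trans_lt (by omega)⟩

section Clustering

variable {V : Type} [Fintype V] [DecidableEq V] {n : ℕ}

def MoveRel (G : SimpleGraph V) (x y : Config V n) : Prop :=
  ∃ i j, G.Adj i j ∧ 1 ≤ x.val i ∧ y.val = move x.val i j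

lemma MoveRel.symm {G : SimpleGraph V} {x y : Config V n} (h : MoveRel G x y) : MoveRel G y x := by
  obtain ⟨i, j, hadj, hxi, hy⟩ := h
  refine ⟨j, i, hadj.symm, hy ▸ one_le_move_apply_right hadj.ne, ?_⟩
  rw [hy, move_move hadj.ne hxi]

def Config.point (v₀ : V) : Config V n := ⟨Pi.single v₀ n, by simp [sum_pi_single']⟩

lemma Config.eq_point {x : Config V n} {v₀ : V} (hx : ∀ v ≠ v₀, x.val v = 0) :
    x = Config.point v₀ := by
  have hv₀ : x.val v₀ = n := (sum_eq_single v₀ (fun v _ => hx v) (by simp)).symm.trans x.2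
  ext v
  by_cases hv : v = v₀
  · subst hv; simp [Config.point, hv₀]
  · simp [Config.point, hv, hx v hv]

lemma card_supp_point (hn : n ≠ 0) (v₀ : V) :
    (supp (Config.point v₀ : Config V n).val).card = 1 := by
  rw [card_eq_one]
  refine ⟨v₀, ?_⟩
  ext v
  by_cases hv : v = v₀ <;> simp [supp, Config.point, Pi.single_apply, hv, hn]

lemma card_supp_pos (hn : n ≠ 0) (x : Config V n) : 0 < (supp x.val).card := by
  obtain ⟨v, -, hv⟩ := exists_ne_zero_of_sum_ne_zero (x.2.trans_ne hn)
  exact card_pos.2 ⟨v, by simpa [supp] using hv⟩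

lemma reflTransGen_moveRel_point {G : SimpleGraph V} (hG : G.Connected) (v₀ : V)
    (x : Config V n) : Relation.ReflTransGen (MoveRel G) x (Config.point v₀) := by
  induction hΦ : ∑ v, x.val v * G.dist v v₀ using Nat.strong_induction_on generalizing x with
  | _ N ih =>
  by_cases hx : ∀ v ≠ v₀, x.val v = 0
  · rw [Config.eq_point hx]
  push Not at hx
  obtain ⟨v, hv, hxv⟩ := hx
  obtain ⟨u, hvu, hdist⟩ := hG.exists_adj_dist_lt hv
  have hxv : 1 ≤ x.val v := Nat.one_le_iff_ne_zero.2 hxv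
  let y : Config V n := ⟨move x.val v u, (sum_move hvu.ne hxv).trans x.2⟩
  have hΦy : ∑ w, (y.val w * G.dist w v₀ : ℤ) =
      ∑ w, (x.val w * G.dist w v₀ : ℤ) - G.dist v v₀ + G.dist u v₀ := by
    rw [sum_comp_move (fun w m => (m * G.dist w v₀ : ℤ)) hvu.ne, Nat.cast_sub hxv]
    push_cast
    ring
  refine .head ⟨v, u, hvu, hxv, rfl⟩ (ih _ ?_ y rfl)
  rw [← hΦ]
  zify
  omega

lemma reflTransGen_moveRel {G : SimpleGraph V} (hG : G.Connected) (x y : Config V n) :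
    Relation.ReflTransGen (MoveRel G) x y := by
  obtain ⟨v₀⟩ := hG.nonempty
  refine (reflTransGen_moveRel_point hG v₀ x).trans (Relation.reflTransGen_swap.1 ?_)
  exact Relation.ReflTransGen.mono (fun _ _ h => MoveRel.symm h) _ _
    (reflTransGen_moveRel_point hG v₀ y)

def HasClusteringRates (G : SimpleGraph V) (P : ℝ → Config V n → Config V n → ℝ) : Prop :=
  ∀ (x y : Config V n) (i j : V), G.Adj i j → 1 ≤ x.val i → y.val = move x.val i j →
    IsTheta (fun ε => P ε x y) (if x.val j = 0 then 1 else 0)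

variable {G : SimpleGraph V} {P : ℝ → Config V n → Config V n → ℝ}

lemma MoveRel.ePos (hrate : HasClusteringRates G P) {x y : Config V n} (h : MoveRel G x y) :
    EPos P x y := by
  obtain ⟨i, j, hadj, hxi, hy⟩ := h
  exact ⟨_, hrate x y i j hadj hxi hy⟩

lemma reflTransGen_ePos (hG : G.Connected) (hrate : HasClusteringRates G P) (x y : Config V n) :
    Relation.ReflTransGen (EPos P) x y :=
  Relation.ReflTransGen.mono (fun _ _ h => MoveRel.ePos hrate h) _ _ (reflTransGen_moveRel hG x y)

lemma ePos_symm (hmoves : ∀ x y, EPos P x y → y = x ∨ MoveRel G x y)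
    (hrate : HasClusteringRates G P) {x y : Config V n} (h : EPos P x y) : EPos P y x := by
  rcases hmoves x y h with rfl | hxy
  · exact h
  · exact hxy.symm.ePos hrate

lemma card_supp_add_order_eq (hmoves : ∀ x y, EPos P x y → y = x ∨ MoveRel G x y)
    (hrate : HasClusteringRates G P) {φP : Config V n → Config V n → ℤ}
    (hφP : ∀ x y, EPos P x y → IsTheta (fun ε => P ε x y) (φP x y)) (x y : Config V n)
    (h : EPos P x y) :
    ((supp x.val).card - 1 : ℤ) + φP x y = ((supp y.val).card - 1 : ℤ) + φP y x := by
  rcases hmoves x y h with rfl | ⟨i, j, hadj, hxi, hy⟩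
  · rfl
  have hyj : 1 ≤ y.val j := hy ▸ one_le_move_apply_right hadj.ne
  have hx : x.val = move y.val j i := by rw [hy, move_move hadj.ne hxi]
  have hφxy := (hφP x y h).unique (hrate x y i j hadj hxi hy)
  have hφyx := (hφP y x (ePos_symm hmoves hrate h)).unique (hrate y x j i hadj.symm hyj hx)
  rw [hφxy, hφyx, hy, card_supp_move hadj.ne hxi, move_apply_left hadj.ne]
  split_ifs <;> omega

end Clustering

theorem clustering_process_OM_reversible_stationary_general
    {V : Type} [Fintype V] [DecidableEq V]
    (G : SimpleGraph V) (hconn : G.Connected)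
    (n : ℕ) (hn : 1 ≤ n)
    (P : ℝ → Config V n → Config V n → ℝ)
    (hstoch : ∀ ε : ℝ, 0 < ε →
      (∀ x y : Config V n, 0 ≤ P ε x y) ∧ ∀ x : Config V n, ∑ y, P ε x y = 1)
    (hmoves : ∀ x y : Config V n, EPos P x y →
      y = x ∨ ∃ i j : V, G.Adj i j ∧ 1 ≤ x.val i ∧ y.val = move x.val i j)
    (hzero : ∀ x y : Config V n, ¬ EPos P x y →
      ∃ εbar > (0 : ℝ), ∀ ε : ℝ, 0 < ε → ε < εbar → P ε x y = 0)
    (hrate : ∀ (x y : Config V n) (i j : V), (G.Adj i j ∨ j = i) → 1 ≤ x.val i →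
      y.val = move x.val i j →
      IsTheta (fun ε => P ε x y) (if x.val j = 0 then 1 else 0))
    (φP : Config V n → Config V n → ℤ)
    (hφP : ∀ x y : Config V n, EPos P x y → IsTheta (fun ε => P ε x y) (φP x y)) :
    (∀ x y : Config V n, EPos P x y →
      (((supp x.val).card : ℤ) - 1) + φP x y = (((supp y.val).card : ℤ) - 1) + φP y x) ∧
    (∀ (π : ℝ → Config V n → ℝ) (φπ : Config V n → ℤ),
      (∀ ε : ℝ, 0 < ε → (∀ z : Config V n, 0 ≤ π ε z) ∧ (∑ z, π ε z) = 1 ∧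
        ∀ y : Config V n, (∑ x, π ε x * P ε x y) = π ε y) →
      (∀ z : Config V n, IsTheta (fun ε => π ε z) (φπ z)) →
      ∀ z : Config V n, φπ z = ((supp z.val).card : ℤ) - 1) := by
  have hrate' : HasClusteringRates G P := fun x y i j hadj => hrate x y i j (Or.inl hadj)
  have hbal := card_supp_add_order_eq hmoves hrate' hφP
  refine ⟨hbal, fun π φπ hπ hφπ => ?_⟩
  have hzero' : ∀ x y, ¬ EPos P x y → ∀ᶠ ε in 𝓝[>] 0, P ε x y = 0 := fun x y hxy => by
    obtain ⟨εbar, hεbar, h⟩ := hzero x y hxy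
    exact (nhdsGT_basis 0).eventually_iff.2 ⟨εbar, hεbar, fun ε hε => h ε hε.1 hε.2⟩
  obtain ⟨c, hc⟩ := exists_order_eq_add_const (fun ε hε => (hstoch ε hε).2) hzero'
    (fun x y => ePos_symm hmoves hrate') (reflTransGen_ePos hconn hrate') hφP hbal
    (fun ε hε => (hπ ε hε).2.2) hφπ
  -- `c = 0`: both `φπ` (by normalisation) and `|s| - 1` (at a point mass) have minimum `0`
  obtain ⟨v₀⟩ := hconn.nonempty
  have : Nonempty (Config V n) := ⟨Config.point v₀⟩
  have hmin := inf'_eq_zero_of_sum_eq_one (fun ε hε => (hπ ε hε).2.1) hφπ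
  obtain ⟨z₀, -, hz₀⟩ := exists_mem_eq_inf' univ_nonempty φπ
  have hpoint := inf'_le φπ (mem_univ (Config.point v₀))
  have := card_supp_pos (by omega) z₀
  have := card_supp_point (n := n) (by omega) v₀
  intro z
  rw [hc] at hz₀ hpoint ⊢
  omega

/-- A clustering process is OM-reversible: `ν(x) = |s(x)| − 1` satisfies order-of-magnitude
detailed balance; moreover any stationary distributions `π^ε` with integer orders of
magnitude satisfy `φ(π(x)) = |s(x)| − 1`. -/
theorem clustering_process_OM_reversible_stationary
    {V : Type} [Fintype V] [DecidableEq V]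
    (G : SimpleGraph V) (hconn : G.Connected)
    (n : ℕ) (hn : 1 ≤ n)
    (P : ℝ → Config V n → Config V n → ℝ)
    (hstoch : ∀ ε : ℝ, 0 < ε →
      (∀ x y : Config V n, 0 ≤ P ε x y) ∧ ∀ x : Config V n, ∑ y, P ε x y = 1)
    (hmoves : ∀ x y : Config V n, EPos P x y →
      y = x ∨ ∃ i j : V, G.Adj i j ∧ 1 ≤ x.val i ∧ y.val = move x.val i j)
    (hzero : ∀ x y : Config V n, ¬ EPos P x y →
      ∃ εbar > (0 : ℝ), ∀ ε : ℝ, 0 < ε → ε < εbar → P ε x y = 0)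
    (hsym : ∀ x y : Config V n, EPos P x y ↔ EPos P y x)
    (hrate : ∀ (x y : Config V n) (i j : V), (G.Adj i j ∨ j = i) → 1 ≤ x.val i →
      y.val = move x.val i j →
      IsTheta (fun ε => P ε x y) (if x.val j = 0 then 1 else 0))
    (φP : Config V n → Config V n → ℤ)
    (hφP : ∀ x y : Config V n, EPos P x y → IsTheta (fun ε => P ε x y) (φP x y)) :
    (∀ x y : Config V n, EPos P x y →
      (((supp x.val).card : ℤ) - 1) + φP x y = (((supp y.val).card : ℤ) - 1) + φP y x) ∧
    (∀ (π : ℝ → Config V n → ℝ) (φπ : Config V n → ℤ),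
      (∀ ε : ℝ, 0 < ε → (∀ z : Config V n, 0 ≤ π ε z) ∧ (∑ z, π ε z) = 1 ∧
        ∀ y : Config V n, (∑ x, π ε x * P ε x y) = π ε y) →
      (∀ z : Config V n, IsTheta (fun ε => π ε z) (φπ z)) →
      ∀ z : Config V n, φπ z = ((supp z.val).card : ℤ) - 1) :=
  clustering_process_OM_reversible_stationary_general G hconn n hn P hstoch hmoves hzero hrate φP
    hφP
end
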